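/- Let G be a finite connected simple graph, κ_0 > 0, and α ∈ [0,1). With I^α_{κ_0} = ∑_{xy∈E} max{0, (1−α)κ_0 − κ_α(x,y)}, the diameter of G satisfies Diam(G) ≤ ⌊(2 + I^α_{κ_0}/(1−α)) / κ_0⌋. -/

import Mathlib

open Finset

/-- A probability measure on a finite set, given as a density. -/
def IsProbMeasure {V : Type*} [Fintype V] (m : V → ℝ) : Prop :=
  (∀ x, 0 ≤ m x) ∧ ∑ x, m x = 1

/-- A coupling between two probability measures on a finite set. -/
def IsCoupling {V : Type*} [Fintype V] (A : V × V → ℝ) (m₁ m₂ : V → ℝ) : Prop :=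
  (∀ p, 0 ≤ A p) ∧ (∀ x, ∑ y, A (x, y) = m₁ x) ∧ (∀ y, ∑ x, A (x, y) = m₂ y)

/-- The Wasserstein-1 (transportation) distance between two probability measures on a
finite set, with respect to a cost `d`. -/
noncomputable def W {V : Type*} [Fintype V] (d : V → V → ℝ) (m₁ m₂ : V → ℝ) : ℝ :=
  sInf {c | ∃ A, IsCoupling A m₁ m₂ ∧ c = ∑ p : V × V, A p * d p.1 p.2}

lemma W_symm {V : Type*} [Fintype V] (d : V → V → ℝ) (hd : ∀ x y, d x y = d y x)
    (m₁ m₂ : V → ℝ) : W d m₁ m₂ = W d m₂ m₁ := by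
  have key : ∀ m₁ m₂ : V → ℝ,
      {c | ∃ A, IsCoupling A m₁ m₂ ∧ c = ∑ p : V × V, A p * d p.1 p.2} ⊆
      {c | ∃ A, IsCoupling A m₂ m₁ ∧ c = ∑ p : V × V, A p * d p.1 p.2} := by
    rintro m₁ m₂ c ⟨A, ⟨h0, h1, h2⟩, rfl⟩
    refine ⟨fun p => A (p.2, p.1), ⟨fun p => h0 _, fun x => h2 x, fun y => h1 y⟩, ?_⟩
    refine Fintype.sum_equiv (Equiv.prodComm V V) _ _ ?_
    intro p
    simp [Equiv.prodComm, hd p.1 p.2]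
  unfold W
  congr 1
  exact Set.Subset.antisymm (key m₁ m₂) (key m₂ m₁)

/-- The `α`-lazy random walk measure at a vertex `x` of a graph. -/
noncomputable def lazyWalk {V : Type*} [Fintype V] [DecidableEq V] (G : SimpleGraph V)
    [DecidableRel G.Adj] (α : ℝ) (x : V) : V → ℝ :=
  fun v => if v = x then α else if G.Adj x v then (1 - α) / (G.degree x) else 0

/-- The `α`-Ricci curvature `κ_α(x,y) = 1 - W(m_x^α, m_y^α)/d(x,y)`. -/
noncomputable def kappaAlpha {V : Type*} [Fintype V] [DecidableEq V] (G : SimpleGraph V)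
    [DecidableRel G.Adj] (α : ℝ) (x y : V) : ℝ :=
  1 - W (fun a b => (G.dist a b : ℝ)) (lazyWalk G α x) (lazyWalk G α y) / (G.dist x y)

lemma kappaAlpha_symm {V : Type*} [Fintype V] [DecidableEq V] (G : SimpleGraph V)
    [DecidableRel G.Adj] (α : ℝ) (x y : V) :
    kappaAlpha G α x y = kappaAlpha G α y x := by
  unfold kappaAlpha
  rw [W_symm _ (fun a b => by rw [SimpleGraph.dist_comm]),
    SimpleGraph.dist_comm]

/-- The Lin–Lu–Yau Ricci curvature `κ_LLY(x,y) = lim_{α → 1⁻} κ_α(x,y)/(1-α)`. -/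
noncomputable def kappaLLY {V : Type*} [Fintype V] [DecidableEq V] (G : SimpleGraph V)
    [DecidableRel G.Adj] (x y : V) : ℝ :=
  Filter.limUnder (nhdsWithin 1 (Set.Ico (0:ℝ) 1)) (fun α => kappaAlpha G α x y / (1 - α))

lemma kappaLLY_symm {V : Type*} [Fintype V] [DecidableEq V] (G : SimpleGraph V)
    [DecidableRel G.Adj] (x y : V) : kappaLLY G x y = kappaLLY G y x := by
  unfold kappaLLY
  congr 1
  funext α
  rw [kappaAlpha_symm]

/-- Integral `α`-Ricci curvature `I^α_{κ₀}`: total amount of `α`-Ricci curvature below the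
threshold `(1-α)κ₀`, summed over the edges of `G`. -/
noncomputable def IAlpha {V : Type*} [Fintype V] [DecidableEq V] (G : SimpleGraph V)
    [DecidableRel G.Adj] (α κ₀ : ℝ) : ℝ :=
  ∑ e ∈ G.edgeFinset,
    Sym2.lift ⟨fun x y => max 0 ((1 - α) * κ₀ - kappaAlpha G α x y),
      fun x y => by simp only []; rw [kappaAlpha_symm]⟩ e

/-- Integral Lin–Lu–Yau Ricci curvature `I_{κ₀}`: total amount of Lin–Lu–Yau Ricci curvature
below the threshold `κ₀`, summed over the edges of `G`. -/
noncomputable def ILLY {V : Type*} [Fintype V] [DecidableEq V] (G : SimpleGraph V)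
    [DecidableRel G.Adj] (κ₀ : ℝ) : ℝ :=
  ∑ e ∈ G.edgeFinset,
    Sym2.lift ⟨fun x y => max 0 (κ₀ - kappaLLY G x y),
      fun x y => by simp only []; rw [kappaLLY_symm]⟩ e

/-- The diameter of a finite graph. -/
noncomputable def gDiam {V : Type*} [Fintype V] (G : SimpleGraph V) : ℕ :=
  Finset.univ.sup fun p : V × V => G.dist p.1 p.2

/-!
For a vertex `x` the function `f = d(·, x)` is 1-Lipschitz, so for every edge `ab` the easy
half of Kantorovich duality gives `E_{m_b} f - E_{m_a} f ≤ W(m_a, m_b) = 1 - κ_α(a, b)`, which is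
at most `1 - (1 - α)κ₀` plus the deficit `max 0 ((1 - α)κ₀ - κ_α(a, b))` of the edge. Summing
along a geodesic from `x` to `y` bounds `E_{m_y} f - E_{m_x} f` by
`d(x, y)(1 - (1 - α)κ₀) + I^α_{κ₀}`. On the other hand one lazy step moves the mean of a
1-Lipschitz function by at most `1 - α`, so `E_{m_x} f ≤ 1 - α` and `E_{m_y} f ≥ d(x, y) - (1 - α)`.
Together, `d(x, y)(1 - α)κ₀ ≤ 2(1 - α) + I^α_{κ₀}`.
-/

open SimpleGraph

lemma SimpleGraph.Connected.dist_sub_dist_le {V : Type*} {G : SimpleGraph V}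
    (hG : G.Connected) (x u v : V) : (G.dist v x : ℝ) - G.dist u x ≤ G.dist u v := by
  have h : G.dist v x ≤ G.dist u v + G.dist u x := by
    simpa only [dist_comm (u := v) (v := u)] using hG.dist_triangle (u := v) (v := u) (w := x)
  rw [sub_le_iff_le_add]
  exact_mod_cast h

section Transport

variable {V : Type*} [Fintype V]

lemma IsProbMeasure.isCoupling_prod {m₁ m₂ : V → ℝ} (h₁ : IsProbMeasure m₁)
    (h₂ : IsProbMeasure m₂) : IsCoupling (fun p => m₁ p.1 * m₂ p.2) m₁ m₂ :=
  ⟨fun p => mul_nonneg (h₁.1 _) (h₂.1 _), fun x => by simp only [← mul_sum, h₂.2, mul_one],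
    fun y => by simp only [← sum_mul, h₁.2, one_mul]⟩

lemma IsCoupling.sum_mul_sub_eq {A : V × V → ℝ} {m₁ m₂ : V → ℝ} (hA : IsCoupling A m₁ m₂)
    (f : V → ℝ) :
    ∑ p : V × V, A p * (f p.2 - f p.1) = ∑ v, m₂ v * f v - ∑ v, m₁ v * f v := by
  simp only [mul_sub, sum_sub_distrib]
  rw [Fintype.sum_prod_type_right (f := fun p => A p * f p.2),
    Fintype.sum_prod_type (f := fun p => A p * f p.1)]
  simp only [← hA.2.1, ← hA.2.2, sum_mul]

lemma sum_mul_sub_sum_mul_le_W (d : V → V → ℝ) {f : V → ℝ} (hf : ∀ a b, f b - f a ≤ d a b)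
    {m₁ m₂ : V → ℝ} (h₁ : IsProbMeasure m₁) (h₂ : IsProbMeasure m₂) :
    ∑ v, m₂ v * f v - ∑ v, m₁ v * f v ≤ W d m₁ m₂ := by
  refine le_csInf ⟨_, _, h₁.isCoupling_prod h₂, rfl⟩ ?_
  rintro c ⟨A, hA, rfl⟩
  rw [← hA.sum_mul_sub_eq f]
  exact sum_le_sum fun p _ => mul_le_mul_of_nonneg_left (hf p.1 p.2) (hA.1 p)

end Transport

section LazyWalk

variable {V : Type*} [Fintype V] [DecidableEq V] (G : SimpleGraph V) [DecidableRel G.Adj]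

lemma sum_lazyWalk_mul (α : ℝ) (x : V) (f : V → ℝ) :
    ∑ v, lazyWalk G α x v * f v
      = α * f x + ∑ v ∈ G.neighborFinset x, (1 - α) / G.degree x * f v := by
  have hsplit : ∀ v, lazyWalk G α x v * f v =
      (if v = x then α * f v else 0) +
      (if v ∈ G.neighborFinset x then (1 - α) / G.degree x * f v else 0) := by
    intro v
    by_cases h : v = x
    · subst h; simp [lazyWalk]
    · by_cases h' : G.Adj x v <;> simp [lazyWalk, h, h']
  simp only [hsplit, sum_add_distrib, sum_ite_eq', mem_univ, if_true, sum_ite_mem, univ_inter]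

variable {G}

lemma isProbMeasure_lazyWalk {α : ℝ} (hα₀ : 0 ≤ α) (hα₁ : α ≤ 1) {x : V}
    (hx : 0 < G.degree x) : IsProbMeasure (lazyWalk G α x) := by
  refine ⟨fun v => ?_, ?_⟩
  · unfold lazyWalk
    split_ifs
    exacts [hα₀, div_nonneg (by linarith) (Nat.cast_nonneg _), le_rfl]
  · have := sum_lazyWalk_mul G α x 1
    simp only [Pi.one_apply, mul_one, sum_const, card_neighborFinset_eq_degree,
      nsmul_eq_mul] at this
    rw [this]
    field_simp
    ring

lemma abs_sum_lazyWalk_mul_sub_le {α : ℝ} (hα₁ : α ≤ 1) {x : V} (hx : 0 < G.degree x)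
    {f : V → ℝ} (hf : ∀ u v, f v - f u ≤ G.dist u v) :
    |∑ v, lazyWalk G α x v * f v - f x| ≤ 1 - α := by
  have hc : 0 ≤ (1 - α) / G.degree x := div_nonneg (by linarith) (Nat.cast_nonneg _)
  have hmean : ∑ v, lazyWalk G α x v * f v - f x
      = ∑ v ∈ G.neighborFinset x, (1 - α) / G.degree x * (f v - f x) := by
    simp only [sum_lazyWalk_mul, mul_sub, sum_sub_distrib, sum_const,
      card_neighborFinset_eq_degree, nsmul_eq_mul]
    field_simp
    ring
  have hstep : ∀ v ∈ G.neighborFinset x, |(1 - α) / G.degree x * (f v - f x)|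
      ≤ (1 - α) / G.degree x := by
    intro v hv
    have hxv : G.Adj x v := (mem_neighborFinset G x v).mp hv
    rw [abs_mul, abs_of_nonneg hc]
    refine mul_le_of_le_one_right hc (abs_sub_le_iff.mpr ⟨?_, ?_⟩)
    · simpa [dist_eq_one_iff_adj.mpr hxv] using hf x v
    · simpa [dist_eq_one_iff_adj.mpr hxv.symm] using hf v x
  calc |∑ v, lazyWalk G α x v * f v - f x|
      ≤ ∑ v ∈ G.neighborFinset x, |(1 - α) / G.degree x * (f v - f x)| :=
        hmean ▸ abs_sum_le_sum_abs _ _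
    _ ≤ ∑ v ∈ G.neighborFinset x, (1 - α) / G.degree x := sum_le_sum hstep
    _ = 1 - α := by
      rw [sum_const, card_neighborFinset_eq_degree, nsmul_eq_mul]
      field_simp

end LazyWalk

section Curvature

variable {V : Type*} [Fintype V] [DecidableEq V] {G : SimpleGraph V} [DecidableRel G.Adj]

lemma kappaAlpha_of_adj (α : ℝ) {a b : V} (hab : G.Adj a b) :
    kappaAlpha G α a b
      = 1 - W (fun u v => (G.dist u v : ℝ)) (lazyWalk G α a) (lazyWalk G α b) := by
  rw [kappaAlpha, dist_eq_one_iff_adj.mpr hab, Nat.cast_one, div_one]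

lemma sum_lazyWalk_mul_sub_le_one_sub_kappaAlpha {α : ℝ} (hα₀ : 0 ≤ α) (hα₁ : α ≤ 1)
    {a b : V} (hab : G.Adj a b) {f : V → ℝ} (hf : ∀ u v, f v - f u ≤ G.dist u v) :
    ∑ v, lazyWalk G α b v * f v - ∑ v, lazyWalk G α a v * f v ≤ 1 - kappaAlpha G α a b := by
  rw [kappaAlpha_of_adj α hab, sub_sub_cancel]
  exact sum_mul_sub_sum_mul_le_W _ hf (isProbMeasure_lazyWalk hα₀ hα₁ hab.degree_pos_left)
    (isProbMeasure_lazyWalk hα₀ hα₁ hab.degree_pos_right)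

variable (G) in
noncomputable def curvatureDeficit (α κ₀ : ℝ) : Sym2 V → ℝ :=
  Sym2.lift ⟨fun x y => max 0 ((1 - α) * κ₀ - kappaAlpha G α x y),
    fun x y => by dsimp only; rw [kappaAlpha_symm]⟩

lemma curvatureDeficit_mk (α κ₀ : ℝ) (x y : V) :
    curvatureDeficit G α κ₀ s(x, y) = max 0 ((1 - α) * κ₀ - kappaAlpha G α x y) :=
  rfl

lemma IAlpha_eq_sum_curvatureDeficit (α κ₀ : ℝ) :
    IAlpha G α κ₀ = ∑ e ∈ G.edgeFinset, curvatureDeficit G α κ₀ e :=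
  rfl

lemma curvatureDeficit_nonneg (α κ₀ : ℝ) (e : Sym2 V) : 0 ≤ curvatureDeficit G α κ₀ e := by
  induction e using Sym2.ind
  rw [curvatureDeficit_mk]
  exact le_max_left _ _

lemma IAlpha_nonneg (α κ₀ : ℝ) : 0 ≤ IAlpha G α κ₀ := by
  rw [IAlpha_eq_sum_curvatureDeficit]
  exact sum_nonneg fun e _ => curvatureDeficit_nonneg α κ₀ e

lemma one_sub_kappaAlpha_le (α κ₀ : ℝ) (x y : V) :
    1 - kappaAlpha G α x y ≤ 1 - (1 - α) * κ₀ + curvatureDeficit G α κ₀ s(x, y) := by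
  rw [curvatureDeficit_mk]
  linarith [le_max_right 0 ((1 - α) * κ₀ - kappaAlpha G α x y)]

lemma sum_curvatureDeficit_le_IAlpha (α κ₀ : ℝ) {u w : V} (p : G.Walk u w) :
    ∑ e ∈ p.edges.toFinset, curvatureDeficit G α κ₀ e ≤ IAlpha G α κ₀ := by
  rw [IAlpha_eq_sum_curvatureDeficit]
  refine sum_le_sum_of_subset_of_nonneg (fun e he => ?_)
    fun e _ _ => curvatureDeficit_nonneg α κ₀ e
  exact mem_edgeFinset.mpr (p.edges_subset_edgeSet (List.mem_toFinset.mp he))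

lemma SimpleGraph.Walk.IsTrail.sum_lazyWalk_mul_sub_le {α : ℝ} (hα₀ : 0 ≤ α) (hα₁ : α ≤ 1)
    (κ₀ : ℝ) {f : V → ℝ} (hf : ∀ u v, f v - f u ≤ G.dist u v) {u w : V} {p : G.Walk u w}
    (hp : p.IsTrail) :
    ∑ v, lazyWalk G α w v * f v - ∑ v, lazyWalk G α u v * f v
      ≤ p.length * (1 - (1 - α) * κ₀) + ∑ e ∈ p.edges.toFinset, curvatureDeficit G α κ₀ e := by
  induction p with
  | nil => simp
  | @cons a b c hab q ih =>
    rw [Walk.isTrail_cons] at hp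
    have hfresh : s(a, b) ∉ q.edges.toFinset := fun h => hp.2 (List.mem_toFinset.mp h)
    rw [Walk.edges_cons, List.toFinset_cons, sum_insert hfresh, Walk.length_cons]
    push_cast
    linarith [ih hp.1, sum_lazyWalk_mul_sub_le_one_sub_kappaAlpha hα₀ hα₁ hab hf,
      one_sub_kappaAlpha_le (G := G) α κ₀ a b]

end Curvature

theorem dist_mul_le_IAlpha {V : Type*} [Fintype V] [DecidableEq V] {G : SimpleGraph V}
    [DecidableRel G.Adj] (hG : G.Connected) {α : ℝ} (hα₀ : 0 ≤ α) (hα₁ : α ≤ 1) (κ₀ : ℝ)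
    (x y : V) :
    (G.dist x y : ℝ) * ((1 - α) * κ₀) ≤ 2 * (1 - α) + IAlpha G α κ₀ := by
  obtain rfl | hxy := eq_or_ne x y
  · simp only [dist_self, Nat.cast_zero, zero_mul]
    linarith [IAlpha_nonneg (G := G) α κ₀]
  obtain ⟨p, hp, hlen⟩ := hG.exists_path_of_dist x y
  have hf := hG.dist_sub_dist_le x
  have hx := abs_sum_lazyWalk_mul_sub_le hα₁ ((hG x y).degree_pos_left hxy) hf
  have hy := abs_sum_lazyWalk_mul_sub_le hα₁ ((hG x y).degree_pos_right hxy) hf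
  have hpath := hp.isTrail.sum_lazyWalk_mul_sub_le hα₀ hα₁ κ₀ hf
  rw [hlen] at hpath
  simp only [dist_self, Nat.cast_zero, sub_zero, dist_comm (u := y)] at hx hy
  linarith [abs_le.mp hx, abs_le.mp hy, sum_curvatureDeficit_le_IAlpha α κ₀ p]

/-- Bonnet–Myers-type estimate with integral `α`-Ricci curvature. -/
theorem stmt_4 {V : Type*} [Fintype V] [DecidableEq V] (G : SimpleGraph V)
    [DecidableRel G.Adj] (hG : G.Connected) (κ₀ : ℝ) (hκ : 0 < κ₀)
    (α : ℝ) (hα : α ∈ Set.Ico (0:ℝ) 1) :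
    (gDiam G : ℤ) ≤ ⌊(2 + IAlpha G α κ₀ / (1 - α)) / κ₀⌋ := by
  obtain ⟨hα₀, hα₁⟩ := hα
  have := hG.nonempty
  obtain ⟨⟨x, y⟩, -, hxy⟩ :=
    exists_mem_eq_sup univ univ_nonempty fun p : V × V => G.dist p.1 p.2
  have key := dist_mul_le_IAlpha hG hα₀ hα₁.le κ₀ x y
  rw [Int.le_floor, Int.cast_natCast, gDiam, hxy, le_div_iff₀ hκ, ← sub_le_iff_le_add',
    le_div_iff₀ (sub_pos.mpr hα₁)]
  linarith
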